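/- arXiv:2007.09725 — 3 statements merged into one kernel-verified Lean document; each statement's English description precedes it below -/
import Mathlib

section
/- Let v₁, …, v_n be distinct pairwise-adjacent vertices of a finite simple graph Γ, let e₁, …, e_n be linearly independent vectors in a real inner product space E, fix a total order ≺ as described, and let b₁, …, b_n be the associated unit vectors. Then the tuple (e₁,…,e_n) is allowable if and only if ⟨b_i, b_j⟩ = 0 for all i ≠ j. -/
variable {V : Type*}

/-- The star of a vertex: the vertex together with its neighbors. -/
def gstar (Γ : SimpleGraph V) (v : V) : Set V :=
  insert v (Γ.neighborSet v)

/-- Vertices `v` and `w` are twist-related if `st(v) ⊆ st(w)` or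
`st(w) ⊆ st(v)`. -/
def TwistRelated (Γ : SimpleGraph V) (v w : V) : Prop :=
  gstar Γ v ⊆ gstar Γ w ∨ gstar Γ w ⊆ gstar Γ v

variable {E : Type*} [NormedAddCommGroup E] [InnerProductSpace ℝ E]

/-- `K_i`: the span of the vectors `e k` for which `k = i`, or `k ≠ i` and
`st(v i) ⊆ st(v k)`. -/
def Kspan (Γ : SimpleGraph V) {n : ℕ} (v : Fin n → V) (e : Fin n → E)
    (i : Fin n) : Submodule ℝ E :=
  Submodule.span ℝ (e '' {k | k = i ∨ (k ≠ i ∧ gstar Γ (v i) ⊆ gstar Γ (v k))})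

/-- The tuple `e` is allowable if for all `i`, `j` with `v i`, `v j` not
twist-related, the subspaces `K_i ∩ L_ij^⊥` and `K_j ∩ L_ij^⊥` are orthogonal,
where `L_ij = K_i ∩ K_j`. -/
def Allowable (Γ : SimpleGraph V) {n : ℕ} (v : Fin n → V) (e : Fin n → E) :
    Prop :=
  ∀ i j : Fin n, ¬ TwistRelated Γ (v i) (v j) →
    ∀ x ∈ Kspan Γ v e i ⊓ (Kspan Γ v e i ⊓ Kspan Γ v e j)ᗮ,
      ∀ y ∈ Kspan Γ v e j ⊓ (Kspan Γ v e i ⊓ Kspan Γ v e j)ᗮ,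
        (inner ℝ x y : ℝ) = 0

/-- `K_i^≺`: the span of the vectors `e k` with `k ≠ i`, `st(v i) ⊆ st(v k)`
and `i ≺ k`. -/
def KprecSpan (Γ : SimpleGraph V) {n : ℕ} (v : Fin n → V) (e : Fin n → E)
    (prec : Fin n → Fin n → Prop) (i : Fin n) : Submodule ℝ E :=
  Submodule.span ℝ
    (e '' {k | k ≠ i ∧ gstar Γ (v i) ⊆ gstar Γ (v k) ∧ prec i k})

/-!
For `i ≠ j` with `st(v i) ⊆ st(v j)`, one of `b i`, `b j` lies in the `K^≺`-space of the other
(the compatibility of `≺` with `≤` decides which), so `⟪b i, b j⟫ = 0` holds for twist-related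
pairs regardless of allowability. For a pair that is not twist-related, `K_i ∩ K_j` is spanned by
the `e k` with `k` above both `i` and `j`, hence lies in `K_i^≺ ∩ K_j^≺`, so `b i` and `b j` are
admissible test vectors in the definition of allowability. Conversely, if the `b i` are
orthonormal, a dimension count gives `K_i = span {b k | st(v i) ⊆ st(v k)}`, and allowability
becomes a statement about spans of subfamilies of an orthonormal family.
-/

open Submodule

theorem LinearIndependent.span_image_inf_span_image {R M ι : Type*} [Ring R] [AddCommGroup M]
    [Module R M] {v : ι → M} (hv : LinearIndependent R v) (s t : Set ι) :
    span R (v '' s) ⊓ span R (v '' t) = span R (v '' (s ∩ t)) := by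
  simp only [Finsupp.span_image_eq_map_linearCombination,
    ← map_inf _ hv.finsuppLinearCombination_injective, Finsupp.supported_inter]

theorem LinearIndependent.span_image_eq_of_le {K M ι : Type*} [DivisionRing K] [AddCommGroup M]
    [Module K M] {e b : ι → M} (he : LinearIndependent K e) (hb : LinearIndependent K b)
    {s : Set ι} (hs : s.Finite) (h : span K (b '' s) ≤ span K (e '' s)) :
    span K (b '' s) = span K (e '' s) := by
  have : Fintype s := hs.fintype
  have hfinrank : ∀ f : ι → M, LinearIndependent K f →
      Module.finrank K (span K (f '' s)) = Fintype.card s := fun f hf => by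
    rw [Set.image_eq_range]
    exact finrank_span_eq_card (hf.comp _ Subtype.val_injective)
  have : FiniteDimensional K (span K (e '' s)) := FiniteDimensional.span_of_finite K (hs.image e)
  exact eq_of_le_of_finrank_le h (by rw [hfinrank e he, hfinrank b hb])

theorem Orthonormal.inner_eq_zero_of_mem_orthogonal_inf {ι : Type*} {b : ι → E}
    (hb : Orthonormal ℝ b) {s t : Set ι} {x y : E} (hx : x ∈ span ℝ (b '' s))
    (hxL : x ∈ (span ℝ (b '' s) ⊓ span ℝ (b '' t))ᗮ) (hy : y ∈ span ℝ (b '' t)) :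
    inner ℝ x y = 0 := by
  rw [← Set.inter_union_sdiff t s, Set.image_union, span_union] at hy
  obtain ⟨y₁, hy₁, y₂, hy₂, rfl⟩ := mem_sup.mp hy
  have hxy₁ : inner ℝ x y₁ = 0 := (mem_orthogonal' _ _).mp hxL y₁
    ⟨span_mono (Set.image_mono Set.inter_subset_right) hy₁,
      span_mono (Set.image_mono Set.inter_subset_left) hy₁⟩
  have hortho : span ℝ (b '' s) ⟂ span ℝ (b '' (t \ s)) := by
    refine isOrtho_span.mpr ?_
    rintro _ ⟨i, hi, rfl⟩ _ ⟨j, hj, rfl⟩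
    exact hb.inner_eq_zero (ne_of_mem_of_not_mem hi hj.2)
  rw [inner_add_right, hxy₁, hortho.inner_eq hx hy₂, zero_add]

section Graph

variable {Γ : SimpleGraph V}

theorem neighborSet_subset_gstar (v : V) : Γ.neighborSet v ⊆ gstar Γ v :=
  Set.subset_insert _ _

theorem gstar_subset_of_adj_of_neighborSet_subset {u w : V} (h : Γ.Adj w u)
    (hlk : Γ.neighborSet u ⊆ gstar Γ w) : gstar Γ u ⊆ gstar Γ w :=
  Set.insert_subset (Set.mem_insert_of_mem _ h) hlk

theorem TwistRelated.symm {v w : V} (h : TwistRelated Γ v w) : TwistRelated Γ w v :=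
  Or.symm h

end Graph

section Clique

variable {Γ : SimpleGraph V} {n : ℕ} {v : Fin n → V} {e : Fin n → E}
  {prec : Fin n → Fin n → Prop} {b : Fin n → E} {i j : Fin n}

theorem Kspan_eq_span_image :
    Kspan Γ v e i = span ℝ (e '' {k | gstar Γ (v i) ⊆ gstar Γ (v k)}) := by
  unfold Kspan
  congr! 2
  ext k
  by_cases hk : k = i <;> simp [hk]

theorem Kspan_antitone (h : gstar Γ (v i) ⊆ gstar Γ (v j)) : Kspan Γ v e j ≤ Kspan Γ v e i := by
  simp only [Kspan_eq_span_image]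
  exact span_mono (Set.image_mono fun _ hk => Set.Subset.trans h hk)

theorem KprecSpan_sup_span_le_Kspan :
    KprecSpan Γ v e prec i ⊔ span ℝ {e i} ≤ Kspan Γ v e i := by
  rw [Kspan_eq_span_image, KprecSpan, ← Set.image_singleton, ← span_union, ← Set.image_union]
  refine span_mono (Set.image_mono ?_)
  rintro k (⟨-, hk, -⟩ | rfl)
  exacts [hk, Set.Subset.rfl]

theorem KprecSpan_sup_span_le_KprecSpan_of_prec [IsStrictOrder (Fin n) prec]
    (h : gstar Γ (v i) ⊆ gstar Γ (v j)) (hp : prec i j) :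
    KprecSpan Γ v e prec j ⊔ span ℝ {e j} ≤ KprecSpan Γ v e prec i := by
  rw [KprecSpan, KprecSpan, ← Set.image_singleton, ← span_union, ← Set.image_union]
  refine span_mono (Set.image_mono ?_)
  rintro k (⟨-, hjk, hpk⟩ | rfl)
  · have hik : prec i k := trans_of prec hp hpk
    exact ⟨by rintro rfl; exact irrefl_of prec _ hik, h.trans hjk, hik⟩
  · exact ⟨by rintro rfl; exact irrefl_of prec _ hp, h, hp⟩

theorem allowable_of_orthonormal (he : LinearIndependent ℝ e)
    (hb_mem : ∀ i, b i ∈ KprecSpan Γ v e prec i ⊔ span ℝ {e i}) (hb : Orthonormal ℝ b) :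
    Allowable Γ v e := by
  have hKb : ∀ i, Kspan Γ v e i = span ℝ (b '' {k | gstar Γ (v i) ⊆ gstar Γ (v k)}) := by
    intro i
    rw [Kspan_eq_span_image]
    refine (he.span_image_eq_of_le hb.linearIndependent (Set.toFinite _) (span_le.mpr ?_)).symm
    rintro _ ⟨l, hl, rfl⟩
    rw [← Kspan_eq_span_image]
    exact Kspan_antitone hl (KprecSpan_sup_span_le_Kspan (hb_mem l))
  intro i j _ x hx y hy
  simp only [hKb] at hx hy
  exact hb.inner_eq_zero_of_mem_orthogonal_inf hx.1 hx.2 hy.1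

variable (hadj : ∀ i j : Fin n, i ≠ j → Γ.Adj (v i) (v j))
  (hprec : ∀ i j : Fin n, Γ.neighborSet (v i) ⊆ gstar Γ (v j) →
    ¬ Γ.neighborSet (v j) ⊆ gstar Γ (v i) → prec i j)
  (hb_mem : ∀ i, b i ∈ KprecSpan Γ v e prec i ⊔ span ℝ {e i})
  (hb_orth : ∀ i, ∀ x ∈ KprecSpan Γ v e prec i, inner ℝ (b i) x = 0)
include hadj hprec

/-- For adjacent vertices, `lk(v i) ⊆ st(v j)` is equivalent to `st(v i) ⊆ st(v j)`. -/
theorem prec_of_gstar_subset_of_not_subset (hij : i ≠ j) (h : gstar Γ (v i) ⊆ gstar Γ (v j))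
    (hn : ¬ gstar Γ (v j) ⊆ gstar Γ (v i)) : prec i j :=
  hprec i j ((neighborSet_subset_gstar _).trans h) fun hlk =>
    hn (gstar_subset_of_adj_of_neighborSet_subset (hadj i j hij) hlk)

theorem Kspan_inf_Kspan_le_KprecSpan (he : LinearIndependent ℝ e)
    (hnt : ¬ TwistRelated Γ (v i) (v j)) :
    Kspan Γ v e i ⊓ Kspan Γ v e j ≤ KprecSpan Γ v e prec i := by
  rw [Kspan_eq_span_image, Kspan_eq_span_image, he.span_image_inf_span_image, KprecSpan]
  refine span_mono (Set.image_mono ?_)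
  rintro k ⟨hik, hjk⟩
  have hki : ¬ gstar Γ (v k) ⊆ gstar Γ (v i) := fun hki => hnt (Or.inr (hjk.trans hki))
  have hne : k ≠ i := by rintro rfl; exact hki subset_rfl
  exact ⟨hne, hik, prec_of_gstar_subset_of_not_subset hadj hprec hne.symm hik hki⟩

include hb_mem hb_orth

theorem inner_eq_zero_of_twistRelated [IsStrictTotalOrder (Fin n) prec] (hij : i ≠ j)
    (htw : TwistRelated Γ (v i) (v j)) : inner ℝ (b i) (b j) = 0 := by
  have hprec_inner : ∀ {i j}, gstar Γ (v i) ⊆ gstar Γ (v j) → prec i j →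
      inner ℝ (b i) (b j) = 0 := fun h hp =>
    hb_orth _ _ (KprecSpan_sup_span_le_KprecSpan_of_prec h hp (hb_mem _))
  wlog h : gstar Γ (v i) ⊆ gstar Γ (v j) generalizing i j
  · rw [real_inner_comm]
    exact this hij.symm htw.symm (htw.resolve_left h)
  by_cases hji : gstar Γ (v j) ⊆ gstar Γ (v i)
  · rcases trichotomous_of prec i j with hp | rfl | hp
    · exact hprec_inner h hp
    · exact absurd rfl hij
    · rw [real_inner_comm]
      exact hprec_inner hji hp
  · exact hprec_inner h (prec_of_gstar_subset_of_not_subset hadj hprec hij h hji)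

theorem inner_eq_zero_of_allowable [IsStrictTotalOrder (Fin n) prec]
    (he : LinearIndependent ℝ e) (hA : Allowable Γ v e) (hij : i ≠ j) :
    inner ℝ (b i) (b j) = 0 := by
  by_cases htw : TwistRelated Γ (v i) (v j)
  · exact inner_eq_zero_of_twistRelated hadj hprec hb_mem hb_orth hij htw
  have hb_perp : ∀ {i j}, ¬ TwistRelated Γ (v i) (v j) →
      b i ∈ (Kspan Γ v e i ⊓ Kspan Γ v e j)ᗮ := fun hnt =>
    orthogonal_le (Kspan_inf_Kspan_le_KprecSpan hadj hprec he hnt)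
      ((mem_orthogonal' _ _).mpr (hb_orth _))
  refine hA i j htw (b i) ⟨KprecSpan_sup_span_le_Kspan (hb_mem i), hb_perp htw⟩
    (b j) ⟨KprecSpan_sup_span_le_Kspan (hb_mem j), ?_⟩
  rw [inf_comm]
  exact hb_perp fun h => htw h.symm

end Clique

theorem stmt_11_general (Γ : SimpleGraph V) {n : ℕ} (v : Fin n → V)
    (hadj : ∀ i j : Fin n, i ≠ j → Γ.Adj (v i) (v j))
    (e : Fin n → E) (he : LinearIndependent ℝ e)
    (prec : Fin n → Fin n → Prop) (hso : IsStrictTotalOrder (Fin n) prec)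
    (hprec : ∀ i j : Fin n, Γ.neighborSet (v i) ⊆ gstar Γ (v j) →
      ¬ Γ.neighborSet (v j) ⊆ gstar Γ (v i) → prec i j)
    (b : Fin n → E)
    (hb_norm : ∀ i, ‖b i‖ = 1)
    (hb_mem : ∀ i, b i ∈ KprecSpan Γ v e prec i ⊔ Submodule.span ℝ {e i})
    (hb_orth : ∀ i, ∀ x ∈ KprecSpan Γ v e prec i, (inner ℝ (b i) x : ℝ) = 0) :
    Allowable Γ v e ↔ ∀ i j : Fin n, i ≠ j → (inner ℝ (b i) (b j) : ℝ) = 0 := by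
  have := hso
  exact ⟨fun hA _ _ hij => inner_eq_zero_of_allowable hadj hprec hb_mem hb_orth he hA hij,
    fun hO => allowable_of_orthonormal he hb_mem ⟨hb_norm, fun _ _ hij => hO _ _ hij⟩⟩

/-- Let `v 1, …, v n` be distinct pairwise-adjacent vertices, `e` a linearly
independent tuple of vectors, `≺` a strict total order on indices refining the
order `v i ≤ v j ↔ lk(v i) ⊆ st(v j)`, and `b i` the unique unit vector in
`K_i^≺ + span{e i}` orthogonal to `K_i^≺` with `⟪e i, b i⟫ > 0`.  Then `e` is
allowable if and only if the vectors `b i` are pairwise orthogonal. -/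
theorem stmt_11 [Fintype V] (Γ : SimpleGraph V) {n : ℕ} (v : Fin n → V)
    (hvinj : Function.Injective v)
    (hadj : ∀ i j : Fin n, i ≠ j → Γ.Adj (v i) (v j))
    (e : Fin n → E) (he : LinearIndependent ℝ e)
    (prec : Fin n → Fin n → Prop) (hso : IsStrictTotalOrder (Fin n) prec)
    (hprec : ∀ i j : Fin n, Γ.neighborSet (v i) ⊆ gstar Γ (v j) →
      ¬ Γ.neighborSet (v j) ⊆ gstar Γ (v i) → prec i j)
    (b : Fin n → E)
    (hb_norm : ∀ i, ‖b i‖ = 1)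
    (hb_mem : ∀ i, b i ∈ KprecSpan Γ v e prec i ⊔ Submodule.span ℝ {e i})
    (hb_orth : ∀ i, ∀ x ∈ KprecSpan Γ v e prec i, (inner ℝ (b i) x : ℝ) = 0)
    (hb_pos : ∀ i, 0 < (inner ℝ (e i) (b i) : ℝ)) :
    Allowable Γ v e ↔ ∀ i j : Fin n, i ≠ j → (inner ℝ (b i) (b j) : ℝ) = 0 :=
  stmt_11_general Γ v hadj e he prec hso hprec b hb_norm hb_mem hb_orth
end

section
/- Let x, v, w be distinct vertices of a finite simple graph Γ with lk(x) ⊆ lk(v), v adjacent to w, and st(v) ⊆ st(w). Then lk(x) ⊆ st(w), so the generator map x ↦ xw (fixing all other generators) defines an automorphism α_{x,w} of A_Γ, the elementary fold ρ_{x,v} and the elementary twist τ_{v,w} are well-defined automorphisms, and in Aut(A_Γ) one has τ_{v,w} ∘ ρ_{x,v} = ρ_{x,v} ∘ α_{x,w} ∘ τ_{v,w}. -/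
variable {V : Type*}

/-- The commutator relations of the right-angled Artin group of `Γ`. -/
def raagRels (Γ : SimpleGraph V) : Set (FreeGroup V) :=
  {r | ∃ u v : V, Γ.Adj u v ∧
    r = FreeGroup.of u * FreeGroup.of v * (FreeGroup.of u)⁻¹ * (FreeGroup.of v)⁻¹}

/-- The right-angled Artin group `A_Γ`, presented with generating set `V` and
one commuting relation for each edge of `Γ`. -/
abbrev RAAG (Γ : SimpleGraph V) := PresentedGroup (raagRels Γ)

/-- The generator of `A_Γ` corresponding to the vertex `v`. -/
def raagGen (Γ : SimpleGraph V) (v : V) : RAAG Γ := PresentedGroup.of v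

/-- `φ` is the elementary automorphism of `A_Γ` sending the generator `a` to
`a·b` and fixing every other generator.  (This is the elementary twist
`τ_{a,b}` when `a ≠ b` are adjacent and `st(a) ⊆ st(b)`, and the elementary
fold `ρ_{a,b}` when `lk(a) ⊆ lk(b)`.) -/
def IsElemAut (Γ : SimpleGraph V) (a c : V) (φ : MulAut (RAAG Γ)) : Prop :=
  φ (raagGen Γ a) = raagGen Γ a * raagGen Γ c ∧
    ∀ u : V, u ≠ a → φ (raagGen Γ u) = raagGen Γ u

/-- Adjacent generators commute in the RAAG. -/
lemma raag_comm (Γ : SimpleGraph V) {u u' : V} (h : Γ.Adj u u') :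
    Commute (raagGen Γ u) (raagGen Γ u') := by
  have hmem : FreeGroup.of u * FreeGroup.of u' * (FreeGroup.of u)⁻¹ * (FreeGroup.of u')⁻¹
      ∈ Subgroup.normalClosure (raagRels Γ) :=
    Subgroup.subset_normalClosure ⟨u, u', h, rfl⟩
  have h1 : PresentedGroup.mk (raagRels Γ)
      (FreeGroup.of u * FreeGroup.of u' * (FreeGroup.of u)⁻¹ * (FreeGroup.of u')⁻¹) = 1 :=
    (QuotientGroup.eq_one_iff _).2 hmem
  have h2 : raagGen Γ u * raagGen Γ u' * (raagGen Γ u)⁻¹ * (raagGen Γ u')⁻¹ = 1 := by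
    simpa [raagGen, PresentedGroup.of, map_mul, map_inv] using h1
  have := mul_eq_one_iff_eq_inv.mp h2
  rw [Commute, SemiconjBy]
  group at this ⊢
  calc raagGen Γ u * raagGen Γ u'
      = (raagGen Γ u * raagGen Γ u' * (raagGen Γ u)⁻¹ * (raagGen Γ u')⁻¹) *
        (raagGen Γ u' * raagGen Γ u) := by group
    _ = raagGen Γ u' * raagGen Γ u := by rw [h2]; group

open scoped Classical in
/-- The generator map for an elementary automorphism preserves the relations. -/
lemma elem_rels (Γ : SimpleGraph V) (a : V) (g : RAAG Γ)
    (hg : ∀ u, Γ.Adj a u → Commute g (raagGen Γ u)) :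
    ∀ r ∈ raagRels Γ,
      FreeGroup.lift (fun u => if u = a then g else raagGen Γ u) r = 1 := by
  classical
  rintro r ⟨u, u', h, rfl⟩
  set f : V → RAAG Γ := fun u => if u = a then g else raagGen Γ u with hf
  have hfval : ∀ z, f z = if z = a then g else raagGen Γ z := fun z => rfl
  have hc : Commute (f u) (f u') := by
    by_cases hu : u = a
    · have hu' : u' ≠ a := fun e => h.ne (hu.trans e.symm)
      rw [hfval u, hfval u', if_pos hu, if_neg hu']
      exact hg u' (hu ▸ h)
    · by_cases hu' : u' = a
      · rw [hfval u, hfval u', if_pos hu', if_neg hu]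
        exact (hg u (hu' ▸ h.symm)).symm
      · rw [hfval u, hfval u', if_neg hu, if_neg hu']
        exact raag_comm Γ h
  simp only [map_mul, map_inv, FreeGroup.lift_apply_of]
  have := hc.eq
  calc f u * f u' * (f u)⁻¹ * (f u')⁻¹
      = f u' * f u * (f u)⁻¹ * (f u')⁻¹ := by rw [← this]
    _ = 1 := by group

open scoped Classical in
/-- Construction of elementary automorphisms. -/
lemma exists_elemAut (Γ : SimpleGraph V) (a c : V) (hac : a ≠ c)
    (h : ∀ u, Γ.Adj a u → Commute (raagGen Γ c) (raagGen Γ u)) :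
    ∃ φ : MulAut (RAAG Γ), IsElemAut Γ a c φ := by
  classical
  have hga : ∀ u, Γ.Adj a u → Commute (raagGen Γ a * raagGen Γ c) (raagGen Γ u) :=
    fun u hu => Commute.mul_left (raag_comm Γ hu) (h u hu)
  have hgb : ∀ u, Γ.Adj a u → Commute (raagGen Γ a * (raagGen Γ c)⁻¹) (raagGen Γ u) :=
    fun u hu => Commute.mul_left (raag_comm Γ hu) ((h u hu).inv_left)
  let F : RAAG Γ →* RAAG Γ := PresentedGroup.toGroup (elem_rels Γ a _ hga)
  let G : RAAG Γ →* RAAG Γ := PresentedGroup.toGroup (elem_rels Γ a _ hgb)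
  have hF : ∀ u : V, F (raagGen Γ u) =
      if u = a then raagGen Γ a * raagGen Γ c else raagGen Γ u := fun u =>
    PresentedGroup.toGroup.of _
  have hG : ∀ u : V, G (raagGen Γ u) =
      if u = a then raagGen Γ a * (raagGen Γ c)⁻¹ else raagGen Γ u := fun u =>
    PresentedGroup.toGroup.of _
  have hFc : F (raagGen Γ c) = raagGen Γ c := by rw [hF, if_neg (Ne.symm hac)]
  have hGc : G (raagGen Γ c) = raagGen Γ c := by rw [hG, if_neg (Ne.symm hac)]
  have h1 : G.comp F = MonoidHom.id _ := by
    ext u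
    show G (F (raagGen Γ u)) = raagGen Γ u
    by_cases hu : u = a
    · subst hu
      rw [hF, if_pos rfl, map_mul, hG, if_pos rfl, hGc]
      group
    · rw [hF, if_neg hu, hG, if_neg hu]
  have h2 : F.comp G = MonoidHom.id _ := by
    ext u
    show F (G (raagGen Γ u)) = raagGen Γ u
    by_cases hu : u = a
    · subst hu
      rw [hG, if_pos rfl, map_mul, map_inv, hF, if_pos rfl, hFc]
      group
    · rw [hG, if_neg hu, hF, if_neg hu]
  refine ⟨MonoidHom.toMulEquiv F G h1 h2, ?_, ?_⟩
  · show F (raagGen Γ a) = _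
    rw [hF, if_pos rfl]
  · intro u hu
    show F (raagGen Γ u) = _
    rw [hF, if_neg hu]

/-- Let `x, v, w` be distinct vertices with `lk(x) ⊆ lk(v)`, `v` adjacent to
`w` and `st(v) ⊆ st(w)`.  Then `lk(x) ⊆ st(w)`, so the generator map
`x ↦ x·w` (fixing all other generators) defines an automorphism `α_{x,w}` of
`A_Γ`; the fold `ρ_{x,v}` and the twist `τ_{v,w}` are well-defined
automorphisms; and `τ_{v,w} ∘ ρ_{x,v} = ρ_{x,v} ∘ α_{x,w} ∘ τ_{v,w}`. -/
theorem stmt_15 [Fintype V] (Γ : SimpleGraph V) (x v w : V)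
    (hxv : x ≠ v) (hxw : x ≠ w) (hvw : v ≠ w)
    (hfold : Γ.neighborSet x ⊆ Γ.neighborSet v)
    (hadj : Γ.Adj v w) (hst : gstar Γ v ⊆ gstar Γ w) :
    Γ.neighborSet x ⊆ gstar Γ w ∧
    (∃ α : MulAut (RAAG Γ), IsElemAut Γ x w α) ∧
    (∃ ρ : MulAut (RAAG Γ), IsElemAut Γ x v ρ) ∧
    (∃ τ : MulAut (RAAG Γ), IsElemAut Γ v w τ) ∧
    (∀ τ ρ α : MulAut (RAAG Γ), IsElemAut Γ v w τ → IsElemAut Γ x v ρ →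
      IsElemAut Γ x w α → τ * ρ = ρ * α * τ) := by
  have hlkxw : Γ.neighborSet x ⊆ gstar Γ w := fun u hu =>
    hst (Set.mem_insert_of_mem _ (hfold hu))
  have starComm : ∀ c u : V, u ∈ gstar Γ c → Commute (raagGen Γ c) (raagGen Γ u) := by
    intro c u hu
    rcases hu with h | h
    · exact h ▸ Commute.refl _
    · exact raag_comm Γ h
  refine ⟨hlkxw, ?_, ?_, ?_, ?_⟩
  · exact exists_elemAut Γ x w hxw fun u hu => starComm w u (hlkxw hu)
  · exact exists_elemAut Γ x v hxv fun u hu => raag_comm Γ (hfold hu)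
  · exact exists_elemAut Γ v w hvw fun u hu =>
      starComm w u (hst (Set.mem_insert_of_mem _ hu))
  · rintro τ ρ α ⟨hτv, hτ⟩ ⟨ρx, hρ⟩ ⟨αx, hα⟩
    have key : ((τ * ρ : MulAut (RAAG Γ)) : RAAG Γ →* RAAG Γ)
        = ((ρ * α * τ : MulAut (RAAG Γ)) : RAAG Γ →* RAAG Γ) := by
      ext u
      show (τ * ρ) (raagGen Γ u) = (ρ * α * τ) (raagGen Γ u)
      rw [MulAut.mul_apply, MulAut.mul_apply, MulAut.mul_apply]
      by_cases hux : u = x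
      · rw [hux]
        simp only [ρx, map_mul, hτ x hxv, hτv, αx, hρ w (Ne.symm hxw), mul_assoc]
      · by_cases huv : u = v
        · rw [huv]
          simp only [hρ v (Ne.symm hxv), hτv, map_mul, hα v (Ne.symm hxv),
            hα w (Ne.symm hxw), hρ w (Ne.symm hxw)]
        · simp only [hρ u hux, hτ u huv, hα u hux]
    exact MulEquiv.toMonoidHom_injective key
end

section
/- Let v ≠ w be adjacent vertices of a finite simple graph Γ with st(v) ⊆ st(w), let u be a vertex with u ≠ v, and let C ⊆ V ∖ st(u) be a union of connected components of the subgraph of Γ induced on V ∖ st(u). Then in Aut(A_Γ) the elementary twist τ_{v,w} commutes with the partial conjugation γ_{u,C}: τ_{v,w} ∘ γ_{u,C} = γ_{u,C} ∘ τ_{v,w}. -/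
variable {V : Type*}

/-- `γ` is the partial conjugation `γ_{u,C}`: the automorphism of `A_Γ` sending
each generator `x ∈ C` to `u·x·u⁻¹` and fixing every other generator. -/
def IsPartialConj (Γ : SimpleGraph V) (u : V) (C : Set V)
    (γ : MulAut (RAAG Γ)) : Prop :=
  (∀ x ∈ C, γ (raagGen Γ x) = raagGen Γ u * raagGen Γ x * (raagGen Γ u)⁻¹) ∧
    ∀ x ∉ C, γ (raagGen Γ x) = raagGen Γ x

/-- `C` is a connected component of the subgraph of `Γ` induced on
`V ∖ st(u)`. -/
def IsComponent (Γ : SimpleGraph V) (u : V) (C : Set V) : Prop :=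
  C ⊆ {x : V | x ∉ gstar Γ u} ∧ C.Nonempty ∧
    ∀ a b : ({x : V | x ∉ gstar Γ u} : Set V), (a : V) ∈ C →
      ((Γ.induce {x : V | x ∉ gstar Γ u}).Reachable a b ↔ (b : V) ∈ C)

/-- `C` is a union of connected components of the subgraph of `Γ` induced on
`V ∖ st(u)`. -/
def IsUnionOfComponents (Γ : SimpleGraph V) (u : V) (C : Set V) : Prop :=
  C ⊆ {x : V | x ∉ gstar Γ u} ∧
    ∀ a b : ({x : V | x ∉ gstar Γ u} : Set V),
      (Γ.induce {x : V | x ∉ gstar Γ u}).Reachable a b →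
        ((a : V) ∈ C ↔ (b : V) ∈ C)


lemma raag_comm_s17 {Γ : SimpleGraph V} {a b : V} (h : Γ.Adj a b) :
    raagGen Γ a * raagGen Γ b = raagGen Γ b * raagGen Γ a := by
  have hr : (FreeGroup.of a * FreeGroup.of b * (FreeGroup.of a)⁻¹ * (FreeGroup.of b)⁻¹ :
      FreeGroup V) ∈ Subgroup.normalClosure (raagRels Γ) :=
    Subgroup.subset_normalClosure ⟨a, b, h, rfl⟩
  have h1 : (PresentedGroup.mk (raagRels Γ))
      (FreeGroup.of a * FreeGroup.of b * (FreeGroup.of a)⁻¹ * (FreeGroup.of b)⁻¹) = 1 :=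
    (QuotientGroup.eq_one_iff _).mpr hr
  simp only [map_mul, map_inv] at h1
  exact commutatorElement_eq_one_iff_mul_comm.mp h1

lemma star_symm {Γ : SimpleGraph V} {a b : V} (h : a ∈ gstar Γ b) : b ∈ gstar Γ a := by
  rcases h with h | h
  · exact Or.inl h.symm
  · exact Or.inr (SimpleGraph.mem_neighborSet .. |>.mpr
      ((SimpleGraph.mem_neighborSet .. |>.mp h).symm))

/-- Let `v ≠ w` be adjacent with `st(v) ⊆ st(w)`, let `u ≠ v`, and let `C` be
a union of connected components of the subgraph induced on `V ∖ st(u)`.  Then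
the elementary twist `τ_{v,w}` commutes with the partial conjugation
`γ_{u,C}` in `Aut(A_Γ)`. -/
theorem stmt_17 [Fintype V] (Γ : SimpleGraph V) (v w u : V) (hvw : v ≠ w)
    (hadj : Γ.Adj v w) (hst : gstar Γ v ⊆ gstar Γ w) (huv : u ≠ v)
    (C : Set V) (hC : IsUnionOfComponents Γ u C)
    (τ γ : MulAut (RAAG Γ))
    (hτ : IsElemAut Γ v w τ) (hγ : IsPartialConj Γ u C γ) :
    τ * γ = γ * τ := by
  obtain ⟨hτv, hτo⟩ := hτ
  obtain ⟨hγc, hγo⟩ := hγ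
  obtain ⟨hCsub, hCcomp⟩ := hC
  -- key: they agree on each generator
  have key : ∀ x : V, τ (γ (raagGen Γ x)) = γ (τ (raagGen Γ x)) := by
    intro x
    by_cases hxv : x = v
    · subst hxv
      by_cases hxC : x ∈ C
      · -- v ∈ C
        have hvst : x ∉ gstar Γ u := hCsub hxC
        have hwC : w ∈ C ∨ w ∈ gstar Γ u := by
          by_cases hw : w ∈ gstar Γ u
          · exact Or.inr hw
          · left
            have hadj' : (Γ.induce {y : V | y ∉ gstar Γ u}).Adj ⟨x, hvst⟩ ⟨w, hw⟩ := by
              simp [SimpleGraph.comap_adj, hadj]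
            exact (hCcomp ⟨x, hvst⟩ ⟨w, hw⟩ hadj'.reachable).mp hxC
        have hγw : γ (raagGen Γ u * raagGen Γ w * (raagGen Γ u)⁻¹) =
            raagGen Γ u * γ (raagGen Γ w) * (raagGen Γ u)⁻¹ := by
          have huC : u ∉ C := fun h => (hCsub h) (Or.inl rfl)
          simp [map_mul, map_inv, hγo u huC]
        have hγwval : raagGen Γ u * raagGen Γ w * (raagGen Γ u)⁻¹ = γ (raagGen Γ w) := by
          rcases hwC with h | h
          · rw [hγc w h]
          · -- w ∈ st(u): either w = u or adjacent
            have hcomm : raagGen Γ u * raagGen Γ w = raagGen Γ w * raagGen Γ u := by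
              rcases h with h | h
              · subst h; rfl
              · exact raag_comm_s17 ((SimpleGraph.mem_neighborSet ..).mp h)
            have hwc : w ∉ C := fun hc => (hCsub hc) h
            rw [hγo w hwc, hcomm]
            group
        rw [hγc x hxC]
        simp only [map_mul, map_inv]
        have huC : u ∉ C := fun h => (hCsub h) (Or.inl rfl)
        rw [hτo u huv, hτv, map_mul, hγc x hxC, ← hγwval]
        group
      · -- v ∉ C
        have hwc : w ∉ C := by
          intro hw
          have hwst : w ∉ gstar Γ u := hCsub hw
          by_cases hv : x ∈ gstar Γ u
          · -- v ∈ st(u) → u ∈ st(v) ⊆ st(w) → w ∈ st(u), contra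
            exact hwst (star_symm (hst (star_symm hv)))
          · have hadj' : (Γ.induce {y : V | y ∉ gstar Γ u}).Adj ⟨x, hv⟩ ⟨w, hwst⟩ := by
              simp [SimpleGraph.comap_adj, hadj]
            exact hxC ((hCcomp ⟨x, hv⟩ ⟨w, hwst⟩ hadj'.reachable).mpr hw)
        rw [hγo x hxC, hτv, map_mul, hγo x hxC, hγo w hwc]
    · by_cases hxC : x ∈ C
      · have huC : u ∉ C := fun h => (hCsub h) (Or.inl rfl)
        rw [hγc x hxC]
        simp only [map_mul, map_inv]
        rw [hτo u huv, hτo x hxv, hγc x hxC]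
      · rw [hγo x hxC, hτo x hxv, hγo x hxC]
  -- conclude equality of automorphisms
  have hhom : (τ.toMonoidHom.comp γ.toMonoidHom : RAAG Γ →* RAAG Γ) =
      γ.toMonoidHom.comp τ.toMonoidHom := by
    apply PresentedGroup.ext
    intro x
    exact key x
  ext g
  exact DFunLike.congr_fun hhom g
end
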